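/- arXiv:0809.0078 — 3 statements merged into one kernel-verified Lean document; each statement's English description precedes it below -/
import Mathlib

section
/- Let τ : S_n(ℂ) → S_m(ℂ) be any real-linear map between the spaces of Hermitian matrices and let 1 ≤ k ≤ m. Then the maximum over density matrices X ∈ S_n(ℂ) of ∑_{j=1}^k λ_j(τ(X)) equals the maximum, over unit vectors x ∈ ℂ^n and orthonormal systems y_1,…,y_k ∈ ℂ^m, of ∑_{j=1}^k tr(τ(x x^*) (y_j y_j^*)). -/
/-!
Ky Fan's maximum principle: for Hermitian `Y` with eigenbasis `(b_p)` and orthonormal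
`y₁, …, y_k`, `∑ⱼ Re tr (Y yⱼ yⱼ*) = ∑_p λ_p c_p` with `c_p = ∑ⱼ |⟨b_p, yⱼ⟩|²`, where
`0 ≤ c_p ≤ 1` (Bessel) and `∑_p c_p = k` (Parseval); such a weighted sum is at most
`λ₁ + ⋯ + λ_k`, with equality when the `yⱼ` are the top `k` eigenvectors. This bounds the right
side by the left, since `x x*` is a density matrix. Conversely, for a density matrix `X` pick
`yⱼ` attaining `λ₁ + ⋯ + λ_k` for `τ X`: as `X ↦ ∑ⱼ Re tr (τ X yⱼ yⱼ*)` is real-linear and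
`X = ∑ λ_q b_q b_q*` is a convex combination of pure states, some eigenvector `x = b_q` of `X`
does at least as well.
-/

open scoped ComplexOrder
open Matrix Kronecker

/-- Frobenius norm of a complex matrix: `√(tr (X Xᴴ))`. -/
noncomputable def frobNorm {n m : Type*} [Fintype n] [Fintype m]
    (X : Matrix n m ℂ) : ℝ :=
  Real.sqrt ((X * Xᴴ).trace.re)

/-- Operator norm `σ₁(τ) = ‖τ‖` of a map between spaces of Hermitian matrices,
with respect to the Frobenius norm. -/
noncomputable def opNorm {n m : Type*} [Fintype n] [Fintype m]
    (τ : Matrix n n ℂ → Matrix m m ℂ) : ℝ :=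
  sSup {c : ℝ | ∃ X : Matrix n n ℂ, X.IsHermitian ∧ frobNorm X ≤ 1 ∧ c = frobNorm (τ X)}

/-- The second singular value of a map between spaces of Hermitian matrices, via the
Courant–Fischer min-max characterization: the infimum over nonzero Hermitian `U` of the
norm of `τ` restricted to the orthogonal complement of `U`. -/
noncomputable def sigma2 {n m : Type*} [Fintype n] [Fintype m]
    (τ : Matrix n n ℂ → Matrix m m ℂ) : ℝ :=
  sInf {c : ℝ | ∃ U : Matrix n n ℂ, U.IsHermitian ∧ U ≠ 0 ∧
    c = sSup {d : ℝ | ∃ X : Matrix n n ℂ, X.IsHermitian ∧ frobNorm X ≤ 1 ∧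
      (U * X).trace.re = 0 ∧ d = frobNorm (τ X)}}

/-- Largest eigenvalue `λ₁` of a Hermitian matrix (junk value `0` otherwise). -/
noncomputable def lambdaMax {n : Type*} [Fintype n] [DecidableEq n]
    (Y : Matrix n n ℂ) : ℝ :=
  if hY : Y.IsHermitian then ⨆ i, hY.eigenvalues i else 0

/-- von Neumann entropy `H(Y) = -∑ λᵢ log λᵢ` of a Hermitian matrix
(junk value `0` otherwise); note `Real.log 0 = 0`. -/
noncomputable def entropy {n : Type*} [Fintype n] [DecidableEq n]
    (Y : Matrix n n ℂ) : ℝ :=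
  if hY : Y.IsHermitian then -∑ i, hY.eigenvalues i * Real.log (hY.eigenvalues i) else 0

/-- Minimum output entropy of a channel: the infimum of `H(τ X)` over density matrices `X`. -/
noncomputable def minEntropy {n m : Type*} [Fintype n] [DecidableEq n] [Fintype m] [DecidableEq m]
    (τ : Matrix n n ℂ → Matrix m m ℂ) : ℝ :=
  sInf {h : ℝ | ∃ X : Matrix n n ℂ, X.PosSemidef ∧ X.trace = 1 ∧ h = entropy (τ X)}

/-- Eigenvalues of a Hermitian matrix arranged in decreasing order:
`eigsDesc Y 0 = λ₁ ≥ eigsDesc Y 1 = λ₂ ≥ …` (junk value `0` if not Hermitian). -/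
noncomputable def eigsDesc {n : ℕ} (Y : Matrix (Fin n) (Fin n) ℂ) : Fin n → ℝ :=
  if hY : Y.IsHermitian then fun i => hY.eigenvalues (Tuple.sort hY.eigenvalues i.rev)
  else fun _ => 0

/-- The sum `λ₁ + ⋯ + λ_k` of the `k` largest eigenvalues of a Hermitian matrix. -/
noncomputable def sumTopEigs {n : ℕ} (k : ℕ) (Y : Matrix (Fin n) (Fin n) ℂ) : ℝ :=
  ∑ i : Fin n, if (i : ℕ) < k then eigsDesc Y i else 0

open scoped InnerProductSpace

/-- Comparing termwise with `t * (c i - 𝟙_S i)` for a threshold `t` separating the values of `μ`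
on `S` from those off `S`. -/
theorem Finset.sum_mul_le_sum_of_forall_notMem_le {ι : Type*} [Fintype ι] (μ c : ι → ℝ)
    {S : Finset ι} (hS : ∀ i ∈ S, ∀ j ∉ S, μ j ≤ μ i) (hc0 : ∀ i, 0 ≤ c i)
    (hc1 : ∀ i, c i ≤ 1) (hc : ∑ i, c i = S.card) :
    ∑ i, μ i * c i ≤ ∑ i ∈ S, μ i := by
  classical
  obtain ⟨t, ht_le, hle_t⟩ : ∃ t, (∀ i ∈ S, t ≤ μ i) ∧ ∀ j ∉ S, μ j ≤ t := by
    rcases S.eq_empty_or_nonempty with rfl | hne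
    · obtain ⟨t, ht⟩ := (Set.finite_range μ).bddAbove
      exact ⟨t, by simp, fun j _ => ht ⟨j, rfl⟩⟩
    · exact ⟨S.inf' hne μ, fun i hi => S.inf'_le μ hi,
        fun j hj => (S.le_inf'_iff hne μ).2 fun i hi => hS i hi j hj⟩
  have hpoint : ∀ i, μ i * c i - (if i ∈ S then μ i else 0) ≤
      t * (c i - if i ∈ S then 1 else 0) := by
    intro i
    by_cases hi : i ∈ S
    · simp only [hi, if_true]
      nlinarith [ht_le i hi, hc1 i]
    · simp only [hi, if_false, sub_zero]
      nlinarith [hle_t i hi, hc0 i]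
  have hsum := Finset.sum_le_sum fun i (_ : i ∈ Finset.univ) => hpoint i
  rw [Finset.sum_sub_distrib, ← Finset.mul_sum, Finset.sum_sub_distrib, hc] at hsum
  simp only [Finset.sum_ite_mem, Finset.univ_inter, Finset.sum_const, nsmul_eq_mul, mul_one,
    sub_self, mul_zero, sub_nonpos] at hsum
  exact hsum

theorem sum_ite_val_lt_eq_sum_castLE {M : Type*} [AddCommMonoid M] {m k : ℕ} (hkm : k ≤ m)
    (g : Fin m → M) :
    ∑ i : Fin m, (if (i : ℕ) < k then g i else 0) = ∑ j : Fin k, g (Fin.castLE hkm j) := by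
  have : Finset.univ.filter (fun i : Fin m => (i : ℕ) < k) =
      Finset.univ.map (Fin.castLEEmb hkm) := by
    ext i
    simp only [Finset.mem_filter, Finset.mem_univ, true_and, Finset.mem_map, Fin.castLEEmb_apply]
    exact ⟨fun h => ⟨⟨i, h⟩, rfl⟩, by rintro ⟨a, rfl⟩; exact a.2⟩
  rw [← Finset.sum_filter, this, Finset.sum_map]
  rfl

section SortDesc

variable {m k : ℕ}

/-- `eigsDesc Y = hY.eigenvalues ∘ sortDesc hY.eigenvalues`. -/
noncomputable def sortDesc (f : Fin m → ℝ) : Equiv.Perm (Fin m) :=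
  Fin.revPerm.trans (Tuple.sort f)

theorem antitone_comp_sortDesc (f : Fin m → ℝ) : Antitone (f ∘ sortDesc f) :=
  (Tuple.monotone_sort f).comp_antitone Fin.rev_anti

noncomputable def topIndices (f : Fin m → ℝ) (hkm : k ≤ m) : Fin k ↪ Fin m :=
  (Fin.castLEEmb hkm).trans (sortDesc f).toEmbedding

theorem le_topIndices_of_notMem_range (f : Fin m → ℝ) (hkm : k ≤ m) (j : Fin k) {i : Fin m}
    (hi : i ∉ Set.range (topIndices f hkm)) : f i ≤ f (topIndices f hkm j) := by
  obtain ⟨i, rfl⟩ := (sortDesc f).surjective i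
  have hki : k ≤ (i : ℕ) := by
    by_contra! h
    exact hi ⟨⟨i, h⟩, rfl⟩
  exact antitone_comp_sortDesc f (show Fin.castLE hkm j ≤ i from Fin.le_def.2 (j.2.le.trans hki))

theorem sumTopEigs_eq_sum_topIndices (hkm : k ≤ m) {Y : Matrix (Fin m) (Fin m) ℂ}
    (hY : Y.IsHermitian) :
    sumTopEigs k Y = ∑ j, hY.eigenvalues (topIndices hY.eigenvalues hkm j) := by
  rw [sumTopEigs, sum_ite_val_lt_eq_sum_castLE hkm, eigsDesc, dif_pos hY]
  rfl

end SortDesc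

section RCLike

variable {𝕜 : Type*} [RCLike 𝕜] {n : Type*} [Fintype n]

theorem trace_vecMulVec_star_mul_vecMulVec_star (a y : n → 𝕜) :
    (vecMulVec a (star a) * vecMulVec y (star y)).trace = (‖star a ⬝ᵥ y‖ ^ 2 : ℝ) := by
  rw [vecMulVec_mul_vecMulVec, trace_vecMulVec, dotProduct_smul, smul_eq_mul, dotProduct_star,
    dotProduct_comm y, RCLike.star_def, RCLike.mul_conj, RCLike.ofReal_pow]

theorem orthonormal_toLp_iff {ι : Type*} [DecidableEq ι] {y : ι → n → 𝕜} :
    Orthonormal 𝕜 (fun j => WithLp.toLp 2 (y j)) ↔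
      ∀ p q, star (y p) ⬝ᵥ y q = if p = q then 1 else 0 := by
  simp_rw [orthonormal_iff_ite, EuclideanSpace.inner_toLp_toLp, dotProduct_comm (y _)]

variable [DecidableEq n]

theorem Matrix.IsHermitian.eq_sum_smul_vecMulVec {A : Matrix n n 𝕜} (hA : A.IsHermitian) :
    A = ∑ i, hA.eigenvalues i •
      vecMulVec ⇑(hA.eigenvectorBasis i) (star ⇑(hA.eigenvectorBasis i)) := by
  conv_lhs => rw [hA.spectral_theorem, Unitary.conjStarAlgAut_apply]
  ext a b
  simp only [diagonal, Function.comp_apply, mul_apply, eigenvectorUnitary_apply, of_apply, mul_ite,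
    mul_zero, Finset.sum_ite_eq', Finset.mem_univ, ↓reduceIte, star_apply, RCLike.star_def,
    sum_apply, smul_apply, vecMulVec_apply, Pi.star_apply, RCLike.real_smul_eq_coe_mul]
  exact Finset.sum_congr rfl fun j _ => by ring

theorem Matrix.IsHermitian.re_trace_mul_vecMulVec {A : Matrix n n 𝕜} (hA : A.IsHermitian)
    (y : n → 𝕜) :
    RCLike.re (A * vecMulVec y (star y)).trace =
      ∑ i, hA.eigenvalues i * ‖⟪hA.eigenvectorBasis i, WithLp.toLp 2 y⟫_𝕜‖ ^ 2 := by
  conv_lhs => rw [hA.eq_sum_smul_vecMulVec]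
  simp only [Finset.sum_mul, trace_sum, map_sum, smul_mul_assoc, trace_smul, RCLike.smul_re,
    trace_vecMulVec_star_mul_vecMulVec_star, RCLike.ofReal_re,
    EuclideanSpace.inner_eq_star_dotProduct, dotProduct_comm y]

theorem Matrix.PosSemidef.exists_le_apply_vecMulVec {X : Matrix n n 𝕜} (hX : X.PosSemidef)
    (htr : X.trace = 1) (φ : Matrix n n 𝕜 →ₗ[ℝ] ℝ) :
    ∃ x : n → 𝕜, star x ⬝ᵥ x = 1 ∧ φ X ≤ φ (vecMulVec x (star x)) := by
  set b := hX.1.eigenvectorBasis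
  set P : n → Matrix n n 𝕜 := fun i => vecMulVec ⇑(b i) (star ⇑(b i))
  have hsum : ∑ i, hX.1.eigenvalues i = 1 := by
    have : ((∑ i, hX.1.eigenvalues i : ℝ) : 𝕜) = 1 := by
      rw [RCLike.ofReal_sum, ← hX.1.trace_eq_sum_eigenvalues, htr]
    exact_mod_cast this
  have : Nonempty n := by
    by_contra! h
    simp at hsum
  obtain ⟨q, -, hq⟩ := Finset.univ.exists_max_image (fun i => φ (P i)) Finset.univ_nonempty
  refine ⟨b q, (orthonormal_toLp_iff.1 b.orthonormal q q).trans (if_pos rfl), ?_⟩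
  calc φ X = ∑ i, hX.1.eigenvalues i * φ (P i) := by
        conv_lhs => rw [hX.1.eq_sum_smul_vecMulVec]
        simp only [map_sum, map_smul, smul_eq_mul, P, b]
    _ ≤ ∑ i, hX.1.eigenvalues i * φ (P q) := Finset.sum_le_sum fun i _ =>
        mul_le_mul_of_nonneg_left (hq i (Finset.mem_univ i)) (hX.eigenvalues_nonneg i)
    _ = φ (P q) := by rw [← Finset.sum_mul, hsum, one_mul]

end RCLike

section KyFan

variable {m k : ℕ} {Y : Matrix (Fin m) (Fin m) ℂ}

theorem Matrix.IsHermitian.sum_re_trace_mul_vecMulVec_le_sumTopEigs (hkm : k ≤ m)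
    (hY : Y.IsHermitian) {y : Fin k → Fin m → ℂ}
    (hy : Orthonormal ℂ fun j => WithLp.toLp 2 (y j)) :
    ∑ j, (Y * vecMulVec (y j) (star (y j))).trace.re ≤ sumTopEigs k Y := by
  set b := hY.eigenvectorBasis
  set c : Fin m → ℝ := fun i => ∑ j, ‖⟪b i, WithLp.toLp 2 (y j)⟫_ℂ‖ ^ 2
  have hLHS : ∑ j, (Y * vecMulVec (y j) (star (y j))).trace.re = ∑ i, hY.eigenvalues i * c i := by
    simp_rw [c, Finset.mul_sum, ← RCLike.re_to_complex, hY.re_trace_mul_vecMulVec]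
    exact Finset.sum_comm
  have hc1 : ∀ i, c i ≤ 1 := fun i => calc
    c i = ∑ j, ‖⟪WithLp.toLp 2 (y j), b i⟫_ℂ‖ ^ 2 := by simp only [c, norm_inner_symm (b i)]
    _ ≤ ‖b i‖ ^ 2 := hy.sum_inner_products_le _
    _ = 1 := by rw [b.orthonormal.1 i, one_pow]
  have hc : ∑ i, c i = k := by
    rw [Finset.sum_comm]
    simp [b.sum_sq_norm_inner_right, hy.1]
  rw [hLHS, sumTopEigs_eq_sum_topIndices hkm hY, ← Finset.sum_map .univ (topIndices _ hkm)]
  refine Finset.sum_mul_le_sum_of_forall_notMem_le _ _ ?_ (fun i => by positivity) hc1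
    (by simpa using hc)
  intro i hi j hj
  obtain ⟨i, -, rfl⟩ := Finset.mem_map.1 hi
  exact le_topIndices_of_notMem_range _ hkm i (by simpa using hj)

theorem Matrix.IsHermitian.exists_orthonormal_sum_re_trace_mul_vecMulVec_eq_sumTopEigs
    (hkm : k ≤ m) (hY : Y.IsHermitian) :
    ∃ y : Fin k → Fin m → ℂ, (Orthonormal ℂ fun j => WithLp.toLp 2 (y j)) ∧
      ∑ j, (Y * vecMulVec (y j) (star (y j))).trace.re = sumTopEigs k Y := by
  set b := hY.eigenvectorBasis
  refine ⟨fun j => b (topIndices hY.eigenvalues hkm j),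
    b.orthonormal.comp _ (topIndices _ hkm).injective, ?_⟩
  rw [sumTopEigs_eq_sum_topIndices hkm hY]
  refine Finset.sum_congr rfl fun j _ => ?_
  rw [← RCLike.re_to_complex, hY.re_trace_mul_vecMulVec]
  simp [b, orthonormal_iff_ite.1 b.orthonormal, apply_ite]

end KyFan

theorem stmt_1_general {n m : ℕ} (k : ℕ) (hkm : k ≤ m)
    (τ : Matrix (Fin n) (Fin n) ℂ →ₗ[ℝ] Matrix (Fin m) (Fin m) ℂ)
    (hτ : ∀ X : Matrix (Fin n) (Fin n) ℂ, X.IsHermitian → (τ X).IsHermitian) :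
    sSup {c : ℝ | ∃ X : Matrix (Fin n) (Fin n) ℂ,
        X.PosSemidef ∧ X.trace = 1 ∧ c = sumTopEigs k (τ X)} =
    sSup {c : ℝ | ∃ (x : Fin n → ℂ) (y : Fin k → Fin m → ℂ),
        star x ⬝ᵥ x = 1 ∧ (∀ p q, star (y p) ⬝ᵥ y q = if p = q then 1 else 0) ∧
        c = ∑ j, ((τ (Matrix.vecMulVec x (star x)) *
          Matrix.vecMulVec (y j) (star (y j))).trace).re} := by
  apply csSup_eq_csSup_of_forall_exists_le
  · rintro _ ⟨X, hX, htr, rfl⟩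
    obtain ⟨y, hy, hyX⟩ :=
      (hτ X hX.1).exists_orthonormal_sum_re_trace_mul_vecMulVec_eq_sumTopEigs hkm
    let φ : Matrix (Fin n) (Fin n) ℂ →ₗ[ℝ] ℝ := ∑ j, Complex.reLm ∘ₗ
      (traceLinearMap (Fin m) ℂ ℂ).restrictScalars ℝ ∘ₗ
        LinearMap.mulRight ℝ (vecMulVec (y j) (star (y j))) ∘ₗ τ
    obtain ⟨x, hx, hφ⟩ := hX.exists_le_apply_vecMulVec htr φ
    refine ⟨_, ⟨x, y, hx, orthonormal_toLp_iff.1 hy, rfl⟩, ?_⟩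
    rw [← hyX]
    simpa [φ] using hφ
  · rintro _ ⟨x, y, hx, hy, rfl⟩
    have hxx := posSemidef_vecMulVec_self_star x
    refine ⟨_, ⟨_, hxx, by rw [trace_vecMulVec, dotProduct_comm, hx], rfl⟩, ?_⟩
    exact (hτ _ hxx.1).sum_re_trace_mul_vecMulVec_le_sumTopEigs hkm (orthonormal_toLp_iff.2 hy)

/-- For a real-linear map τ between Hermitian matrix spaces and 1 ≤ k ≤ m,
the maximum over density matrices X of the sum of the k largest eigenvalues of τ(X) equals
the maximum over unit vectors x ∈ ℂⁿ and orthonormal systems y₁,…,y_k ∈ ℂᵐ of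
∑_j tr(τ(x x*) (y_j y_j*)). -/
theorem stmt_1 {n m : ℕ} (k : ℕ) (hk1 : 1 ≤ k) (hkm : k ≤ m)
    (τ : Matrix (Fin n) (Fin n) ℂ →ₗ[ℝ] Matrix (Fin m) (Fin m) ℂ)
    (hτ : ∀ X : Matrix (Fin n) (Fin n) ℂ, X.IsHermitian → (τ X).IsHermitian) :
    sSup {c : ℝ | ∃ X : Matrix (Fin n) (Fin n) ℂ,
        X.PosSemidef ∧ X.trace = 1 ∧ c = sumTopEigs k (τ X)} =
    sSup {c : ℝ | ∃ (x : Fin n → ℂ) (y : Fin k → Fin m → ℂ),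
        star x ⬝ᵥ x = 1 ∧ (∀ p q, star (y p) ⬝ᵥ y q = if p = q then 1 else 0) ∧
        c = ∑ j, ((τ (Matrix.vecMulVec x (star x)) *
          Matrix.vecMulVec (y j) (star (y j))).trace).re} :=
  stmt_1_general k hkm τ hτ
end

section
/- Let τ : S_n(ℂ) → S_m(ℂ) be a completely positive map, τ(X) = ∑_{i=1}^l A_i X A_i^* with A_i ∈ ℂ^{m×n}, and set A(τ) := ∑_{i=1}^l A_i A_i^*. Then for every density matrix X ∈ S_n(ℂ) and every 1 ≤ k ≤ m, ∑_{j=1}^k λ_j(τ(X)) ≤ ∑_{j=1}^k λ_j(A(τ)). -/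
open scoped ComplexOrder
open Matrix Kronecker

/-!
A density matrix satisfies `0 ≤ X ≤ 1` in the Loewner order (its eigenvalues are nonnegative
and sum to `1`), so `A(τ) - τ(X) = ∑ᵢ Aᵢ (1 - X) Aᵢᴴ ≥ 0`, and it remains to see that Ky Fan
sums are monotone in the Loewner order. By Ky Fan's principle, `λ₁(Y) + ⋯ + λ_k(Y)` is the
maximum of `Re tr(PY)` over `0 ≤ P ≤ 1` with `tr P = min(N, k)`: in an eigenbasis of `Y`,
`Re tr(PY)` is a combination of the eigenvalues with weights in `[0, 1]` summing to `min(N, k)`,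
and the maximum is attained at the spectral projection onto the top `k` eigenvectors. If
`C ≤ B`, evaluating at the maximiser `P` for `C` gives `Re tr(PC) ≤ Re tr(PB)`, because the
trace of a product of positive semidefinite matrices is nonnegative.
-/

open Unitary

namespace Matrix

variable {n 𝕜 : Type*} [Fintype n] [DecidableEq n] [RCLike 𝕜]

lemma trace_conjStarAlgAut_diagonal_mul (U : unitaryGroup n 𝕜) (t : n → ℝ) (M : Matrix n n 𝕜) :
    (conjStarAlgAut 𝕜 _ U (diagonal (RCLike.ofReal ∘ t)) * M).trace =
      ∑ i, t i * (star (U : Matrix n n 𝕜) * M * U) i i := by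
  rw [conjStarAlgAut_apply, Matrix.mul_assoc, trace_mul_cycle, trace_mul_comm]
  simp [trace, diagonal_mul]

lemma posSemidef_conjStarAlgAut_diagonal (U : unitaryGroup n 𝕜) {t : n → ℝ}
    (ht : ∀ i, 0 ≤ t i) :
    (conjStarAlgAut 𝕜 _ U (diagonal (RCLike.ofReal ∘ t))).PosSemidef := by
  rw [conjStarAlgAut_apply]
  refine (posSemidef_diagonal_iff.mpr fun i => ?_).mul_mul_conjTranspose_same _
  exact RCLike.ofReal_nonneg.mpr (ht i)

lemma one_sub_conjStarAlgAut_diagonal (U : unitaryGroup n 𝕜) (t : n → ℝ) :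
    1 - conjStarAlgAut 𝕜 _ U (diagonal (RCLike.ofReal ∘ t)) =
      conjStarAlgAut 𝕜 _ U (diagonal (RCLike.ofReal ∘ (1 - t))) := by
  rw [← map_one (conjStarAlgAut 𝕜 _ U), ← map_sub]
  congr 1
  ext i j
  by_cases h : i = j <;> simp [h]

lemma IsHermitian.star_eigenvectorUnitary_mul_mul {Y : Matrix n n 𝕜} (hY : Y.IsHermitian) :
    star (hY.eigenvectorUnitary : Matrix n n 𝕜) * Y * (hY.eigenvectorUnitary : Matrix n n 𝕜) =
      diagonal (RCLike.ofReal ∘ hY.eigenvalues) := by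
  simpa using hY.conjStarAlgAut_star_eigenvectorUnitary

lemma IsHermitian.trace_mul_eq_sum_eigenvalues_mul {Y : Matrix n n 𝕜} (hY : Y.IsHermitian)
    (M : Matrix n n 𝕜) :
    (M * Y).trace = ∑ i, hY.eigenvalues i *
      (star (hY.eigenvectorUnitary : Matrix n n 𝕜) * M * hY.eigenvectorUnitary) i i := by
  rw [trace_mul_comm, ← trace_conjStarAlgAut_diagonal_mul, ← hY.spectral_theorem]

lemma PosSemidef.trace_mul_nonneg {A B : Matrix n n 𝕜} (hA : A.PosSemidef) (hB : B.PosSemidef) :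
    0 ≤ (A * B).trace := by
  rw [hB.1.trace_mul_eq_sum_eigenvalues_mul]
  exact Finset.sum_nonneg fun i _ =>
    mul_nonneg (RCLike.ofReal_nonneg.mpr (hB.eigenvalues_nonneg i))
      (hA.conjTranspose_mul_mul_same _).diag_nonneg

lemma PosSemidef.one_sub_of_trace_eq_one {X : Matrix n n 𝕜} (hX : X.PosSemidef)
    (htr : X.trace = 1) : (1 - X).PosSemidef := by
  have hsum : ∑ i, hX.1.eigenvalues i = 1 := by
    exact_mod_cast hX.1.trace_eq_sum_eigenvalues.symm.trans htr
  have hle (i : n) : hX.1.eigenvalues i ≤ 1 :=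
    hsum ▸ Finset.single_le_sum (fun j _ => hX.eigenvalues_nonneg j) (Finset.mem_univ i)
  rw [hX.1.spectral_theorem, one_sub_conjStarAlgAut_diagonal]
  exact posSemidef_conjStarAlgAut_diagonal _ fun i => sub_nonneg.mpr (hle i)

end Matrix

lemma Fin.sum_ite_val_lt_one (N k : ℕ) :
    ∑ j : Fin N, (if (j : ℕ) < k then (1 : ℝ) else 0) = min N k := by
  rw [Finset.sum_boole, Fin.card_filter_val_lt]

lemma Antitone.sum_mul_le_sum_ite_val_lt {N k : ℕ} {μ w : Fin N → ℝ} (hμ : Antitone μ)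
    (hw0 : ∀ j, 0 ≤ w j) (hw1 : ∀ j, w j ≤ 1) (hw : ∑ j, w j = min N k) :
    ∑ j, w j * μ j ≤ ∑ j : Fin N, if (j : ℕ) < k then μ j else 0 := by
  rcases N with _ | N
  · simp
  -- `c` separates the first `k` values of `μ` from the others, so every term of
  -- `∑ (w - 𝟙_{<k}) (μ - c)` is nonpositive, while `∑ (w - 𝟙_{<k}) = 0`.
  set c := μ ⟨min (k - 1) N, by omega⟩
  have key (j : Fin (N + 1)) : (w j - if (j : ℕ) < k then 1 else 0) * (μ j - c) ≤ 0 := by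
    split_ifs with hj
    · exact mul_nonpos_of_nonpos_of_nonneg (by linarith [hw1 j])
        (sub_nonneg.mpr (hμ (Fin.le_def.mpr (by simp; omega))))
    · exact mul_nonpos_of_nonneg_of_nonpos (by simpa using hw0 j)
        (sub_nonpos.mpr (hμ (Fin.le_def.mpr (by simp; omega))))
  have h := Finset.sum_nonpos (s := Finset.univ) fun j _ => key j
  simp only [sub_mul, mul_sub, Finset.sum_sub_distrib, ← Finset.sum_mul, hw,
    Fin.sum_ite_val_lt_one] at h
  simp only [ite_mul, one_mul, zero_mul] at h
  linarith

section KyFan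

variable {N : ℕ} {Y : Matrix (Fin N) (Fin N) ℂ}

noncomputable def eigsDescPerm (hY : Y.IsHermitian) : Equiv.Perm (Fin N) :=
  Fin.revPerm.trans (Tuple.sort hY.eigenvalues)

lemma eigsDesc_apply (hY : Y.IsHermitian) (i : Fin N) :
    eigsDesc Y i = hY.eigenvalues (eigsDescPerm hY i) := by
  simp [eigsDesc, hY, eigsDescPerm]

lemma eigsDesc_antitone (hY : Y.IsHermitian) : Antitone (eigsDesc Y) := by
  intro i j hij
  simp only [eigsDesc, dif_pos hY]
  exact Tuple.monotone_sort hY.eigenvalues (Fin.rev_le_rev.mpr hij)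

theorem re_trace_mul_le_sumTopEigs {M : Matrix (Fin N) (Fin N) ℂ} (hY : Y.IsHermitian)
    (hM : M.PosSemidef) (hM1 : (1 - M).PosSemidef) {k : ℕ} (htr : M.trace = min N k) :
    (M * Y).trace.re ≤ sumTopEigs k Y := by
  set U : Matrix (Fin N) (Fin N) ℂ := ↑hY.eigenvectorUnitary
  set w : Fin N → ℝ := fun i => (star U * M * U) i i |>.re
  have hw0 (i : Fin N) : 0 ≤ w i :=
    (Complex.le_def.mp ((hM.conjTranspose_mul_mul_same U).diag_nonneg (i := i))).1
  have hw1 (i : Fin N) : w i ≤ 1 := by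
    have h := (Complex.le_def.mp ((hM1.conjTranspose_mul_mul_same U).diag_nonneg (i := i))).1
    simp only [Matrix.mul_sub, Matrix.sub_mul, Matrix.mul_one] at h
    simpa [U, w, ← star_eq_conjTranspose] using h
  have hw : ∑ i, w i = min N k := by
    have h : (star U * M * U).trace = M.trace := by
      rw [trace_mul_cycle, mul_star_self_of_mem hY.eigenvectorUnitary.2, Matrix.one_mul]
    simpa [w, trace, Complex.re_sum] using congrArg Complex.re (h.trans htr)
  have htrace : (M * Y).trace.re = ∑ i, w i * hY.eigenvalues i := by
    simp [hY.trace_mul_eq_sum_eigenvalues_mul, Complex.re_sum, w, U, mul_comm]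
  rw [htrace, ← Equiv.sum_comp (eigsDescPerm hY)]
  simp only [← eigsDesc_apply]
  exact (eigsDesc_antitone hY).sum_mul_le_sum_ite_val_lt (fun _ => hw0 _) (fun _ => hw1 _)
    ((Equiv.sum_comp _ w).trans hw)

theorem exists_re_trace_mul_eq_sumTopEigs (hY : Y.IsHermitian) (k : ℕ) :
    ∃ P : Matrix (Fin N) (Fin N) ℂ, P.PosSemidef ∧ (1 - P).PosSemidef ∧
      P.trace = min N k ∧ (P * Y).trace.re = sumTopEigs k Y := by
  set t : Fin N → ℝ := fun i => if ((eigsDescPerm hY).symm i : ℕ) < k then 1 else 0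
  have ht (j : Fin N) : t (eigsDescPerm hY j) = if (j : ℕ) < k then 1 else 0 := by simp [t]
  have hsum : ∑ i, t i = min N k :=
    (Equiv.sum_comp (eigsDescPerm hY) t).symm.trans
      ((Finset.sum_congr rfl fun j _ => ht j).trans (Fin.sum_ite_val_lt_one N k))
  have ht0 (i : Fin N) : 0 ≤ t i := by simp only [t]; split_ifs <;> norm_num
  have ht1 (i : Fin N) : 0 ≤ (1 - t) i := by simp only [t, Pi.sub_apply]; split_ifs <;> norm_num
  refine ⟨conjStarAlgAut ℂ _ hY.eigenvectorUnitary (diagonal (RCLike.ofReal ∘ t)),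
    posSemidef_conjStarAlgAut_diagonal _ ht0, ?_, ?_, ?_⟩
  · rw [one_sub_conjStarAlgAut_diagonal]
    exact posSemidef_conjStarAlgAut_diagonal _ ht1
  · rw [← Matrix.mul_one (conjStarAlgAut ℂ _ _ _), trace_conjStarAlgAut_diagonal_mul,
      Matrix.mul_one, star_mul_self_of_mem hY.eigenvectorUnitary.2]
    simp only [one_apply_eq, mul_one]
    rw [← Complex.ofReal_natCast, ← hsum, Complex.ofReal_sum]
    rfl
  · rw [trace_conjStarAlgAut_diagonal_mul, hY.star_eigenvectorUnitary_mul_mul, sumTopEigs,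
      ← Equiv.sum_comp (eigsDescPerm hY)]
    simp [ht, eigsDesc_apply hY, apply_ite]

theorem sumTopEigs_mono {B C : Matrix (Fin N) (Fin N) ℂ} (hC : C.IsHermitian)
    (hBC : (B - C).PosSemidef) (k : ℕ) : sumTopEigs k C ≤ sumTopEigs k B := by
  obtain ⟨P, hP, hP1, htr, hPC⟩ := exists_re_trace_mul_eq_sumTopEigs hC k
  have hB : B.IsHermitian := by simpa using hBC.1.add hC
  have h := (Complex.le_def.mp (hP.trace_mul_nonneg hBC)).1
  rw [Matrix.mul_sub, trace_sub, Complex.sub_re, Complex.zero_re, sub_nonneg] at h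
  exact hPC ▸ h.trans (re_trace_mul_le_sumTopEigs hB hP hP1 htr)

end KyFan

theorem stmt_2_general {n m l : ℕ} (A : Fin l → Matrix (Fin m) (Fin n) ℂ)
    (X : Matrix (Fin n) (Fin n) ℂ) (hX : X.PosSemidef) (hX1 : X.trace = 1)
    (k : ℕ) :
    sumTopEigs k (∑ i, A i * X * (A i)ᴴ) ≤ sumTopEigs k (∑ i, A i * (A i)ᴴ) := by
  have hτX : (∑ i, A i * X * (A i)ᴴ).PosSemidef :=
    posSemidef_sum _ fun i _ => hX.mul_mul_conjTranspose_same (A i)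
  refine sumTopEigs_mono hτX.1 ?_ k
  rw [← Finset.sum_sub_distrib]
  refine posSemidef_sum _ fun i _ => ?_
  simpa [Matrix.mul_sub, Matrix.sub_mul] using
    (hX.one_sub_of_trace_eq_one hX1).mul_mul_conjTranspose_same (A i)

/-- For a completely positive map τ(X) = ∑ᵢ Aᵢ X Aᵢ* and A(τ) = ∑ᵢ Aᵢ Aᵢ*,
for every density matrix X and 1 ≤ k ≤ m, the sum of the k largest eigenvalues of τ(X)
is at most the sum of the k largest eigenvalues of A(τ). -/
theorem stmt_2 {n m l : ℕ} (A : Fin l → Matrix (Fin m) (Fin n) ℂ)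
    (X : Matrix (Fin n) (Fin n) ℂ) (hX : X.PosSemidef) (hX1 : X.trace = 1)
    (k : ℕ) (hk1 : 1 ≤ k) (hkm : k ≤ m) :
    sumTopEigs k (∑ i, A i * X * (A i)ᴴ) ≤ sumTopEigs k (∑ i, A i * (A i)ᴴ) :=
  stmt_2_general A X hX hX1 k
end

section
/- Let τ : S_n(ℂ) → S_m(ℂ) be a quantum channel with Kraus operators A_1,…,A_l, and set A(τ) := ∑_{i=1}^l A_i A_i^*. Then the minimum output entropy satisfies H(τ) ≥ −log λ_1(A(τ)). -/
open scoped ComplexOrder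
open Matrix Kronecker

/-! For a density matrix `X` we have `X ≤ 1` in the Loewner order, and `X ↦ ∑ Aᵢ X Aᵢᴴ` is
monotone, so `τ X ≤ ∑ Aᵢ Aᵢᴴ ≤ λ₁ • 1`. Hence every eigenvalue `pᵢ` of the density matrix `τ X`
is at most `λ₁`, and `H(τ X) = -∑ pᵢ log pᵢ ≥ -∑ pᵢ log λ₁ = -log λ₁`. -/

open scoped MatrixOrder

namespace Matrix

variable {ι m n : Type*} [Fintype ι] [Fintype n]

def krausMap (A : ι → Matrix m n ℂ) (X : Matrix n n ℂ) : Matrix m m ℂ :=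
  ∑ i, A i * X * (A i)ᴴ

lemma krausMap_sub (A : ι → Matrix m n ℂ) (X Y : Matrix n n ℂ) :
    krausMap A (X - Y) = krausMap A X - krausMap A Y := by
  simp only [krausMap, Matrix.mul_sub, Matrix.sub_mul, Finset.sum_sub_distrib]

lemma PosSemidef.krausMap [Fintype m] {X : Matrix n n ℂ} (hX : X.PosSemidef)
    (A : ι → Matrix m n ℂ) : (krausMap A X).PosSemidef :=
  posSemidef_sum _ fun i _ => hX.mul_mul_conjTranspose_same (A i)

lemma krausMap_mono [Fintype m] (A : ι → Matrix m n ℂ) : Monotone (krausMap A) :=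
  fun X Y hXY => by
    rw [le_iff, ← krausMap_sub]
    exact PosSemidef.krausMap hXY A

variable [DecidableEq n]

lemma trace_krausMap [Fintype m] {A : ι → Matrix m n ℂ} (hA : ∑ i, (A i)ᴴ * A i = 1)
    (X : Matrix n n ℂ) : (krausMap A X).trace = X.trace := by
  simp_rw [krausMap, trace_sum, trace_mul_cycle (A _) X, ← trace_sum, ← Finset.sum_mul, hA,
    Matrix.one_mul]

variable [Fintype m] [DecidableEq m]

lemma IsHermitian.le_algebraMap_iff {M : Matrix m m ℂ} (hM : M.IsHermitian) {c : ℝ} :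
    M ≤ algebraMap ℝ _ c ↔ ∀ i, hM.eigenvalues i ≤ c := by
  rw [le_algebraMap_iff_spectrum_le hM.isSelfAdjoint, hM.spectrum_real_eq_range_eigenvalues]
  simp

lemma IsHermitian.sum_eigenvalues_eq_one {M : Matrix m m ℂ} (hM : M.IsHermitian)
    (htr : M.trace = 1) : ∑ i, hM.eigenvalues i = 1 := by
  have h := hM.trace_eq_sum_eigenvalues
  rw [htr] at h
  exact_mod_cast congrArg RCLike.re h.symm

lemma PosSemidef.le_one_of_trace_eq_one {X : Matrix n n ℂ} (hX : X.PosSemidef)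
    (htr : X.trace = 1) : X ≤ 1 := by
  rw [← map_one (algebraMap ℝ (Matrix n n ℂ)), hX.1.le_algebraMap_iff]
  intro i
  rw [← hX.1.sum_eigenvalues_eq_one htr]
  exact Finset.single_le_sum (fun j _ => hX.eigenvalues_nonneg j) (Finset.mem_univ i)

lemma IsHermitian.le_lambdaMax {M : Matrix m m ℂ} (hM : M.IsHermitian) :
    M ≤ algebraMap ℝ _ (lambdaMax M) := by
  rw [hM.le_algebraMap_iff, lambdaMax, dif_pos hM]
  exact le_ciSup (Set.finite_range _).bddAbove

lemma lambdaMax_zero : lambdaMax (0 : Matrix m m ℂ) = 0 := by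
  rw [lambdaMax, dif_pos isHermitian_zero, isHermitian_zero.eigenvalues_eq_zero_iff.2 rfl]
  exact Real.iSup_const_zero

end Matrix

open Matrix

lemma Real.sum_mul_log_le_log_of_le {ι : Type*} [Fintype ι] {p : ι → ℝ} {c : ℝ}
    (hp : ∀ i, 0 ≤ p i) (hsum : ∑ i, p i = 1) (hc : ∀ i, p i ≤ c) :
    ∑ i, p i * Real.log (p i) ≤ Real.log c :=
  calc ∑ i, p i * Real.log (p i) ≤ ∑ i, p i * Real.log c := by
        refine Finset.sum_le_sum fun i _ => ?_
        rcases (hp i).eq_or_lt with h0 | hpos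
        · simp [← h0]
        · exact mul_le_mul_of_nonneg_left (Real.log_le_log hpos (hc i)) (hp i)
    _ = Real.log c := by rw [← Finset.sum_mul, hsum, one_mul]

section Entropy

variable {ι m n : Type*} [Fintype m] [DecidableEq m] [Fintype n] [DecidableEq n]

lemma neg_log_le_entropy {Y : Matrix m m ℂ} (hY : Y.PosSemidef) (htr : Y.trace = 1) {c : ℝ}
    (hc : Y ≤ algebraMap ℝ _ c) : -Real.log c ≤ entropy Y := by
  rw [entropy, dif_pos hY.1, neg_le_neg_iff]
  exact Real.sum_mul_log_le_log_of_le hY.eigenvalues_nonneg (hY.1.sum_eigenvalues_eq_one htr)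
    (hY.1.le_algebraMap_iff.1 hc)

lemma minEntropy_of_isEmpty [IsEmpty n] (τ : Matrix n n ℂ → Matrix m m ℂ) :
    minEntropy τ = 0 := by
  rw [minEntropy]
  convert Real.sInf_empty using 2
  refine Set.eq_empty_of_forall_notMem ?_
  rintro _ ⟨X, -, htr, -⟩
  simp [Matrix.trace] at htr

lemma le_minEntropy [Nonempty n] {τ : Matrix n n ℂ → Matrix m m ℂ} {b : ℝ}
    (h : ∀ X : Matrix n n ℂ, X.PosSemidef → X.trace = 1 → b ≤ entropy (τ X)) :
    b ≤ minEntropy τ := by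
  obtain ⟨i⟩ := ‹Nonempty n›
  unfold minEntropy
  apply le_csInf
  · refine ⟨_, diagonal (Pi.single i 1), ?_, ?_, rfl⟩
    · refine posSemidef_diagonal_iff.2 fun j => ?_
      rcases eq_or_ne j i with rfl | hj <;> simp [*]
    · simp [trace_diagonal]
  · rintro _ ⟨X, hX, htr, rfl⟩
    exact h X hX htr

theorem neg_log_lambdaMax_le_minEntropy [Fintype ι] {A : ι → Matrix m n ℂ}
    (hA : ∑ i, (A i)ᴴ * A i = 1) :
    -Real.log (lambdaMax (krausMap A 1)) ≤ minEntropy (krausMap A) := by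
  rcases isEmpty_or_nonempty n with hn | hn
  · rw [minEntropy_of_isEmpty, Subsingleton.elim (1 : Matrix n n ℂ) 0]
    simp [krausMap, lambdaMax_zero]
  · have hB : krausMap A 1 ≤ algebraMap ℝ _ (lambdaMax (krausMap A 1)) :=
      (PosSemidef.one.krausMap A).1.le_lambdaMax
    refine le_minEntropy fun X hX htr => ?_
    exact neg_log_le_entropy (hX.krausMap A) (trace_krausMap hA X ▸ htr)
      ((krausMap_mono A (hX.le_one_of_trace_eq_one htr)).trans hB)

end Entropy

/-- For a quantum channel τ with Kraus operators A₁,…,A_l and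
A(τ) = ∑ᵢ Aᵢ Aᵢ*, the minimum output entropy satisfies H(τ) ≥ -log λ₁(A(τ)). -/
theorem stmt_3 {n m l : ℕ} (A : Fin l → Matrix (Fin m) (Fin n) ℂ)
    (hA : ∑ i, (A i)ᴴ * A i = 1) :
    -Real.log (lambdaMax (∑ i, A i * (A i)ᴴ)) ≤
      minEntropy (fun X : Matrix (Fin n) (Fin n) ℂ => ∑ i, A i * X * (A i)ᴴ) := by
  rw [show ∑ i, A i * (A i)ᴴ = krausMap A 1 by simp only [krausMap, Matrix.mul_one]]
  exact neg_log_lambdaMax_le_minEntropy hA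
end
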